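/- Let H be a topologically free Hopf algebra over k[[h]] (k a field) and define H' := { a ∈ H : δ_n(a) ∈ hⁿ H^{⊗n} for all n ∈ ℕ }. Then H' is a k[[h]]-subalgebra of H containing 1. -/

import Mathlib

/-!
Write `Δ_E` for the iterated coproduct with `unit ∘ ε` in the slots outside `E`, so that
`δ_E = Σ_{E' ⊆ E} (-1)^{|E \ E'|} Δ_{E'}` and, by Möbius inversion on the Boolean lattice,
`Δ_E = Σ_{F ⊆ E} δ_F`. Each `Δ_E` is an algebra map; expanding `Δ_E(ab) = Δ_E(a) Δ_E(b)` and
inverting again gives `δ_Φ(ab) = Σ_{Λ ∪ Y = Φ} δ_Λ(a) δ_Y(b)`.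

By the counit axiom, `δ_E(a)` is `δ_{|E|}(a)` with `1` inserted in the slots outside `E`, so for
`a ∈ H'` it is divisible by `t^{|E|}`. As `|Λ| + |Y| ≥ |Φ|`, every summand of `δ_Φ(ab)` is then
divisible by `t^{|Φ|}`. Finally `δ_n(1) = 0` for `n ≥ 1`, and the defining conditions are linear.
-/
open TensorProduct

noncomputable section

universe u

/-- A bundled `R`-algebra, used to form iterated tensor powers. -/
structure AlgB (R : Type u) [CommRing R] : Type (u + 1) where
  X : Type u
  [ring : Ring X]
  [alg : Algebra R X]

attribute [instance] AlgB.ring AlgB.alg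

section Mach

variable (R H : Type u) [CommRing R] [Ring H] [Algebra R H]

/-- The `n`-th tensor power `H^{⊗ n}` (with `H^{⊗ 0} = R`, `H^{⊗ 1} = H`). -/
def Tpow : ℕ → AlgB R
  | 0 => ⟨R⟩
  | 1 => ⟨H⟩
  | n + 2 => ⟨H ⊗[R] (Tpow (n + 1)).X⟩

/-- Apply a linear endomorphism of `H` in each tensor slot. -/
def tmap : (n : ℕ) → (Fin n → (H →ₗ[R] H)) → ((Tpow R H n).X →ₗ[R] (Tpow R H n).X)
  | 0, _ => LinearMap.id
  | 1, f => f 0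
  | n + 2, f => TensorProduct.map (f 0) (tmap (n + 1) fun i => f i.succ)

/-- The iterated coproduct `Δⁿ : H → H^{⊗ n}`, with `Δ⁰ = ε`, `Δ¹ = id`. -/
def Dit (cu : H →ₗ[R] R) (cm : H →ₗ[R] H ⊗[R] H) : (n : ℕ) → H →ₗ[R] (Tpow R H n).X
  | 0 => cu
  | 1 => LinearMap.id
  | n + 2 => (TensorProduct.map LinearMap.id (Dit cu cm (n + 1))) ∘ₗ cm

/-- `unit ∘ ε : H → H`. -/
def uem (cu : H →ₗ[R] R) : H →ₗ[R] H := (Algebra.linearMap R H) ∘ₗ cu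

/-- `Δ_E : H → H^{⊗ n}`: the iterated coproduct inserted into the slots of `E`,
with units (`unit ∘ ε`) in the slots outside `E`. -/
def DeltaE (cu : H →ₗ[R] R) (cm : H →ₗ[R] H ⊗[R] H) (n : ℕ) (E : Finset (Fin n)) :
    H →ₗ[R] (Tpow R H n).X :=
  (tmap R H n fun i => if i ∈ E then LinearMap.id else uem R H cu) ∘ₗ Dit R H cu cm n

/-- `δ_E := Σ_{E' ⊆ E} (-1)^{|E| - |E'|} Δ_{E'}`. -/
def deltaE (cu : H →ₗ[R] R) (cm : H →ₗ[R] H ⊗[R] H) (n : ℕ) (E : Finset (Fin n)) :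
    H →ₗ[R] (Tpow R H n).X :=
  ∑ E' ∈ E.powerset, ((-1 : ℤ) ^ (E.card - E'.card)) • DeltaE R H cu cm n E'

end Mach


/-- Drinfeld's subset `H' = { a ∈ H | δ_n(a) ∈ tⁿ·H^{⊗n} for all n }`,
for a Hopf algebra `H` over `R` and a distinguished element `t ∈ R`. -/
def Hset (R H : Type u) [CommRing R] [Ring H] [Algebra R H]
    (cu : H →ₗ[R] R) (cm : H →ₗ[R] H ⊗[R] H) (t : R) : Set H :=
  {a : H | ∀ n : ℕ, ∃ y : (Tpow R H n).X, deltaE R H cu cm n Finset.univ a = t ^ n • y}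

open Finset

namespace Finset

theorem powerset_map {α β : Type*} (f : α ↪ β) (s : Finset α) :
    (s.map f).powerset = s.powerset.map (mapEmbedding f).toEmbedding := by
  ext u
  simp [subset_map_iff, eq_comm]

variable {α : Type*} [DecidableEq α] {s t : Finset α}

theorem sum_Icc_neg_one_pow_card_sub_card_left (h : s ⊆ t) :
    ∑ u ∈ Icc s t, (-1 : ℤ) ^ (#u - #s) = if s = t then 1 else 0 := by
  have hdisj : ∀ v ∈ (t \ s).powerset, Disjoint s v := fun v hv =>
    disjoint_sdiff.mono_right (mem_powerset.1 hv)
  rw [Icc_eq_image_powerset h, sum_image fun v hv w hw hvw => by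
      rw [← union_sdiff_cancel_left (hdisj v hv), ← union_sdiff_cancel_left (hdisj w hw)]
      exact congrArg (· \ s) hvw,
    sum_congr rfl fun v hv => by
      rw [card_union_of_disjoint (hdisj v hv), Nat.add_sub_cancel_left],
    sum_powerset_neg_one_pow_card]
  simp only [sdiff_eq_empty_iff_subset,
    show t ⊆ s ↔ s = t from ⟨h.antisymm, fun e => e ▸ Subset.rfl⟩]

theorem sum_Icc_neg_one_pow_card_sub_card_right (h : s ⊆ t) :
    ∑ u ∈ Icc s t, (-1 : ℤ) ^ (#t - #u) = if s = t then 1 else 0 := by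
  have hpar : ∀ u ∈ Icc s t, (-1 : ℤ) ^ (#t - #u) = (-1) ^ (#t - #s) * (-1) ^ (#u - #s) := by
    intro u hu
    obtain ⟨hsu, hut⟩ := mem_Icc.1 hu
    have := card_le_card hsu
    have := card_le_card hut
    rw [← pow_add, show #t - #s + (#u - #s) = #t - #u + 2 * (#u - #s) by omega, pow_add,
      pow_mul]
    simp
  rw [sum_congr rfl hpar, ← mul_sum, sum_Icc_neg_one_pow_card_sub_card_left h]
  split_ifs with hst <;> simp [hst]

theorem sum_powerset_sum_powerset_neg_one_pow_smul {M : Type*} [AddCommGroup M] (E : Finset α)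
    (D : Finset α → M) :
    ∑ F ∈ E.powerset, ∑ G ∈ F.powerset, (-1 : ℤ) ^ (#F - #G) • D G = D E := by
  rw [sum_comm' (t' := E.powerset) (s' := fun G => Icc G E) fun F G => by
    simp only [mem_powerset, mem_Icc]
    exact ⟨fun h => ⟨⟨h.2, h.1⟩, h.2.trans h.1⟩, fun h => ⟨h.1.2, h.1.1⟩⟩]
  simp_rw [← sum_smul]
  rw [sum_congr rfl fun G hG => by
      rw [sum_Icc_neg_one_pow_card_sub_card_left (mem_powerset.1 hG), ite_smul, one_smul,
        zero_smul],
    sum_ite_eq' E.powerset E D, if_pos (mem_powerset_self E)]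

end Finset

open Pointwise

namespace Submodule

variable {R M N : Type*} [CommSemiring R] [AddCommMonoid M] [Module R M] [AddCommMonoid N]
  [Module R N] {a b : R} {x y : M}

theorem mem_smul_pointwise_top_iff : x ∈ a • (⊤ : Submodule R M) ↔ ∃ y, a • y = x := by
  simp [mem_smul_pointwise_iff_exists]

theorem map_mem_smul_pointwise_top (f : M →ₗ[R] N) (hx : x ∈ a • (⊤ : Submodule R M)) :
    f x ∈ a • (⊤ : Submodule R N) := by
  obtain ⟨y, rfl⟩ := mem_smul_pointwise_top_iff.1 hx
  exact mem_smul_pointwise_top_iff.2 ⟨f y, (map_smul f a y).symm⟩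

theorem pow_smul_pointwise_top_le (a : R) {m n : ℕ} (h : m ≤ n) :
    a ^ n • (⊤ : Submodule R M) ≤ a ^ m • ⊤ := by
  intro x hx
  obtain ⟨y, rfl⟩ := mem_smul_pointwise_top_iff.1 hx
  exact mem_smul_pointwise_top_iff.2
    ⟨a ^ (n - m) • y, by rw [smul_smul, ← pow_add, Nat.add_sub_cancel' h]⟩

theorem mul_mem_smul_pointwise_top {A : Type*} [Semiring A] [Algebra R A] {x y : A}
    (hx : x ∈ a • (⊤ : Submodule R A)) (hy : y ∈ b • (⊤ : Submodule R A)) :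
    x * y ∈ (a * b) • (⊤ : Submodule R A) := by
  obtain ⟨u, rfl⟩ := mem_smul_pointwise_top_iff.1 hx
  obtain ⟨v, rfl⟩ := mem_smul_pointwise_top_iff.1 hy
  exact mem_smul_pointwise_top_iff.2 ⟨u * v, (smul_mul_smul_comm a u b v).symm⟩

end Submodule

section Bialgebra

variable {R H : Type u} [CommRing R] [Ring H] [Bialgebra R H]

local notation "ηε" => uem R H Coalgebra.counit
local notation "Δ[" n "]" => Dit R H Coalgebra.counit Coalgebra.comul n
local notation "Δ[" n ", " E "]" => DeltaE R H Coalgebra.counit Coalgebra.comul n E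
local notation "δ[" n ", " E "]" => deltaE R H Coalgebra.counit Coalgebra.comul n E

def tmapAlgHom : (n : ℕ) → (Fin n → (H →ₐ[R] H)) → ((Tpow R H n).X →ₐ[R] (Tpow R H n).X)
  | 0, _ => AlgHom.id R R
  | 1, f => f 0
  | n + 2, f => Algebra.TensorProduct.map (f 0) (tmapAlgHom (n + 1) fun i => f i.succ)

theorem toLinearMap_tmapAlgHom : ∀ (n : ℕ) (f : Fin n → (H →ₐ[R] H)),
    (tmapAlgHom n f).toLinearMap = tmap R H n (fun i => (f i).toLinearMap)
  | 0, _ => rfl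
  | 1, _ => rfl
  | n + 2, f => TensorProduct.ext' fun x y => by
    change f 0 x ⊗ₜ tmapAlgHom (n + 1) (fun i => f i.succ) y
      = f 0 x ⊗ₜ tmap R H (n + 1) (fun i => (f i.succ).toLinearMap) y
    rw [← toLinearMap_tmapAlgHom]
    rfl

def DitAlgHom : (n : ℕ) → H →ₐ[R] (Tpow R H n).X
  | 0 => Bialgebra.counitAlgHom R H
  | 1 => AlgHom.id R H
  | n + 2 => (Algebra.TensorProduct.map (AlgHom.id R H) (DitAlgHom (n + 1))).comp
      (Bialgebra.comulAlgHom R H)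

theorem toLinearMap_DitAlgHom : ∀ n : ℕ, (DitAlgHom (R := R) (H := H) n).toLinearMap = Δ[n]
  | 0 => rfl
  | 1 => rfl
  | n + 2 => by
    change (Algebra.TensorProduct.map (AlgHom.id R H) (DitAlgHom (n + 1))).toLinearMap ∘ₗ
      Coalgebra.comul = TensorProduct.map LinearMap.id Δ[n + 1] ∘ₗ Coalgebra.comul
    rw [← toLinearMap_DitAlgHom]
    rfl

def DeltaEAlgHom (n : ℕ) (E : Finset (Fin n)) : H →ₐ[R] (Tpow R H n).X :=
  (tmapAlgHom n fun i => if i ∈ E then AlgHom.id R H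
    else (Algebra.ofId R H).comp (Bialgebra.counitAlgHom R H)).comp (DitAlgHom n)

theorem DeltaEAlgHom_apply (n : ℕ) (E : Finset (Fin n)) (a : H) :
    DeltaEAlgHom n E a = Δ[n, E] a := by
  change ((tmapAlgHom n _).toLinearMap ∘ₗ (DitAlgHom n).toLinearMap) a = _
  rw [toLinearMap_DitAlgHom, toLinearMap_tmapAlgHom]
  unfold DeltaE
  congr
  ext i : 1
  split_ifs <;> rfl

theorem DeltaE_mul (n : ℕ) (E : Finset (Fin n)) (a b : H) :
    Δ[n, E] (a * b) = Δ[n, E] a * Δ[n, E] b := by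
  simp only [← DeltaEAlgHom_apply, map_mul]

theorem DeltaE_one (n : ℕ) (E : Finset (Fin n)) : Δ[n, E] 1 = 1 := by
  rw [← DeltaEAlgHom_apply, map_one]

theorem deltaE_apply (n : ℕ) (E : Finset (Fin n)) (a : H) :
    δ[n, E] a = ∑ G ∈ E.powerset, (-1 : ℤ) ^ (#E - #G) • Δ[n, G] a := by
  simp [deltaE, LinearMap.sum_apply]

theorem sum_deltaE_powerset (n : ℕ) (E : Finset (Fin n)) (a : H) :
    ∑ F ∈ E.powerset, δ[n, F] a = Δ[n, E] a := by
  simp only [deltaE_apply, sum_powerset_sum_powerset_neg_one_pow_smul]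

theorem deltaE_mul (n : ℕ) (Φ : Finset (Fin n)) (a b : H) :
    δ[n, Φ] (a * b) = ∑ p ∈ Φ.powerset ×ˢ Φ.powerset with p.1 ∪ p.2 = Φ,
      δ[n, p.1] a * δ[n, p.2] b := by
  calc δ[n, Φ] (a * b)
      = ∑ E ∈ Φ.powerset, (-1 : ℤ) ^ (#Φ - #E) •
          ∑ p ∈ E.powerset ×ˢ E.powerset, δ[n, p.1] a * δ[n, p.2] b := by
        rw [deltaE_apply]
        refine sum_congr rfl fun E _ => ?_
        rw [DeltaE_mul, ← sum_deltaE_powerset n E a, ← sum_deltaE_powerset n E b, sum_mul_sum,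
          ← sum_product']
    _ = ∑ p ∈ Φ.powerset ×ˢ Φ.powerset,
          (∑ E ∈ Icc (p.1 ∪ p.2) Φ, (-1 : ℤ) ^ (#Φ - #E)) • (δ[n, p.1] a * δ[n, p.2] b) := by
        simp_rw [smul_sum, sum_smul]
        exact sum_comm' fun E p => by
          simp only [mem_powerset, mem_product, mem_Icc, union_subset_iff]
          exact ⟨fun h => ⟨⟨h.2, h.1⟩, h.2.1.trans h.1, h.2.2.trans h.1⟩,
            fun h => ⟨h.1.2, h.1.1⟩⟩
    _ = _ := by
        rw [sum_filter]
        refine sum_congr rfl fun p hp => ?_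
        obtain ⟨h1, h2⟩ := mem_product.1 hp
        rw [sum_Icc_neg_one_pow_card_sub_card_right
          (union_subset (mem_powerset.1 h1) (mem_powerset.1 h2)), ite_smul, one_smul, zero_smul]

theorem map_uem_comp_comul {N : Type*} [AddCommMonoid N] [Module R N] (W : H →ₗ[R] N) :
    map ηε W ∘ₗ Coalgebra.comul = mk R H N 1 ∘ₗ W := by
  calc map ηε W ∘ₗ Coalgebra.comul
      = map (Algebra.linearMap R H) W ∘ₗ (LinearMap.rTensor H Coalgebra.counit ∘ₗ
          Coalgebra.comul) := by
        rw [← LinearMap.comp_assoc, LinearMap.rTensor, ← map_comp, LinearMap.comp_id]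
        rfl
    _ = mk R H N 1 ∘ₗ W := by
        rw [Coalgebra.rTensor_counit_comp_comul]
        ext
        simp

theorem map_comp_uem_comp_comul {M : Type*} [AddCommMonoid M] [Module R M] (f : H →ₗ[R] M) :
    map f ηε ∘ₗ Coalgebra.comul = (mk R M H).flip 1 ∘ₗ f := by
  calc map f ηε ∘ₗ Coalgebra.comul
      = map f (Algebra.linearMap R H) ∘ₗ (LinearMap.lTensor H Coalgebra.counit ∘ₗ
          Coalgebra.comul) := by
        rw [← LinearMap.comp_assoc, LinearMap.lTensor, ← map_comp, LinearMap.comp_id]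
        rfl
    _ = (mk R M H).flip 1 ∘ₗ f := by
        rw [Coalgebra.lTensor_counit_comp_comul]
        ext
        simp

variable (R H) in
def insertUnit : (n : ℕ) → Fin (n + 1) → ((Tpow R H n).X →ₗ[R] (Tpow R H (n + 1)).X)
  | 0, _ => Algebra.linearMap R H
  | 1, ⟨0, _⟩ => mk R H H 1
  | 1, ⟨_ + 1, _⟩ => (mk R H H).flip 1
  | n + 2, ⟨0, _⟩ => mk R H (Tpow R H (n + 2)).X 1
  | n + 2, ⟨j + 1, h⟩ => LinearMap.lTensor H (insertUnit (n + 1) ⟨j, Nat.lt_of_succ_lt_succ h⟩)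

theorem insertUnit_succ_zero (n : ℕ) :
    insertUnit R H (n + 1) 0 = mk R H (Tpow R H (n + 1)).X 1 := by
  cases n <;> rfl

theorem insertUnit_add_two_succ (n : ℕ) (j : Fin (n + 2)) :
    insertUnit R H (n + 2) j.succ = LinearMap.lTensor H (insertUnit R H (n + 1) j) :=
  rfl

theorem tmap_comp_Dit_add_two (n : ℕ) (g : Fin (n + 2) → H →ₗ[R] H) :
    tmap R H (n + 2) g ∘ₗ Δ[n + 2]
      = map (g 0) (tmap R H (n + 1) (fun k => g k.succ) ∘ₗ Δ[n + 1]) ∘ₗ Coalgebra.comul := by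
  change map (g 0) _ ∘ₗ (map LinearMap.id Δ[n + 1] ∘ₗ Coalgebra.comul) = _
  rw [← LinearMap.comp_assoc, ← map_comp, LinearMap.comp_id]

theorem tmap_comp_Dit_of_eq_uem : ∀ (n : ℕ) (i : Fin (n + 1)) (g : Fin (n + 1) → H →ₗ[R] H),
    g i = ηε →
      tmap R H (n + 1) g ∘ₗ Δ[n + 1]
        = insertUnit R H n i ∘ₗ tmap R H n (g ∘ i.succAbove) ∘ₗ Δ[n]
  | 0, i, g, hg => by
    obtain rfl : i = 0 := Fin.fin_one_eq_zero i
    change g 0 ∘ₗ LinearMap.id = Algebra.linearMap R H ∘ₗ LinearMap.id ∘ₗ Coalgebra.counit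
    rw [hg]
    rfl
  | n + 1, i, g, hg => by
    induction i using Fin.cases with
    | zero =>
      rw [tmap_comp_Dit_add_two, hg, map_uem_comp_comul, insertUnit_succ_zero]
      congr 3
    | succ j =>
      rw [tmap_comp_Dit_add_two]
      match n, j, g, hg with
      | 0, 0, g, hg =>
        change map (g 0) (g 1 ∘ₗ LinearMap.id) ∘ₗ Coalgebra.comul
          = (mk R H H).flip 1 ∘ₗ g 0 ∘ₗ LinearMap.id
        rw [show g 1 = ηε from hg, LinearMap.comp_id, LinearMap.comp_id, map_comp_uem_comp_comul]
      | m + 1, j, g, hg =>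
        rw [tmap_comp_Dit_of_eq_uem (m + 1) j (fun k => g k.succ) hg, tmap_comp_Dit_add_two]
        simp only [insertUnit_add_two_succ, Function.comp_def, Fin.succ_succAbove_zero,
          Fin.succ_succAbove_succ]
        exact (congrArg (· ∘ₗ Coalgebra.comul) (LinearMap.lTensor_comp_map _ _ _ _)).symm.trans
          (LinearMap.comp_assoc _ _ _)

theorem DeltaE_map_succAboveEmb (n : ℕ) (i : Fin (n + 1)) (F : Finset (Fin n)) :
    Δ[n + 1, F.map i.succAboveEmb] = insertUnit R H n i ∘ₗ Δ[n, F] := by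
  unfold DeltaE
  rw [tmap_comp_Dit_of_eq_uem n i _ (by simp [Fin.succAbove_ne])]
  congr 3
  ext k : 1
  simp

theorem deltaE_map_succAboveEmb (n : ℕ) (i : Fin (n + 1)) (F : Finset (Fin n)) (a : H) :
    δ[n + 1, F.map i.succAboveEmb] a = insertUnit R H n i (δ[n, F] a) := by
  simp only [deltaE_apply, powerset_map, sum_map, map_sum, map_zsmul, card_map,
    RelEmbedding.coe_toEmbedding, mapEmbedding_apply, DeltaE_map_succAboveEmb,
    LinearMap.comp_apply]

theorem deltaE_mem_pow_smul_top {t : R} {a : H}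
    (ha : ∀ n, δ[n, univ] a ∈ t ^ n • (⊤ : Submodule R (Tpow R H n).X)) :
    ∀ (n : ℕ) (E : Finset (Fin n)), δ[n, E] a ∈ t ^ #E • (⊤ : Submodule R (Tpow R H n).X)
  | 0, E => by
    rw [Subsingleton.elim E univ]
    exact ha 0
  | n + 1, E => by
    by_cases hE : E = univ
    · simpa [hE] using ha (n + 1)
    obtain ⟨i, hi⟩ : ∃ i, i ∉ E := by simpa [eq_univ_iff_forall] using hE
    obtain ⟨F, -, rfl⟩ := subset_map_iff (s := E) (t := univ) (f := i.succAboveEmb) |>.1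
      fun x hx => by simp [ne_of_mem_of_not_mem hx hi]
    rw [deltaE_map_succAboveEmb, card_map]
    exact Submodule.map_mem_smul_pointwise_top _ (deltaE_mem_pow_smul_top ha n F)

theorem deltaE_one_of_nonempty {n : ℕ} {E : Finset (Fin n)} (hE : E.Nonempty) :
    δ[n, E] 1 = 0 := by
  rw [deltaE_apply]
  simp only [DeltaE_one, ← sum_smul]
  rw [← Iic_eq_powerset E, ← Icc_bot, bot_eq_empty,
    sum_Icc_neg_one_pow_card_sub_card_right (empty_subset E), if_neg hE.ne_empty.symm, zero_smul]

variable (R H) in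
def hsetSubmodule (t : R) : Submodule R H :=
  ⨅ n, (t ^ n • (⊤ : Submodule R (Tpow R H n).X)).comap δ[n, univ]

theorem coe_hsetSubmodule (t : R) :
    (hsetSubmodule R H t : Set H) = Hset R H Coalgebra.counit Coalgebra.comul t := by
  ext a
  simp only [SetLike.mem_coe, hsetSubmodule, Submodule.mem_iInf, Submodule.mem_comap,
    Submodule.mem_smul_pointwise_top_iff, Hset, Set.mem_ofPred_eq, eq_comm]

theorem one_mem_hsetSubmodule (t : R) : (1 : H) ∈ hsetSubmodule R H t := by
  refine Submodule.mem_iInf _ |>.2 fun n => ?_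
  cases n with
  | zero => simp
  | succ n => simp [deltaE_one_of_nonempty univ_nonempty]

theorem mul_mem_hsetSubmodule {t : R} {a b : H} (ha : a ∈ hsetSubmodule R H t)
    (hb : b ∈ hsetSubmodule R H t) : a * b ∈ hsetSubmodule R H t := by
  rw [hsetSubmodule, Submodule.mem_iInf] at ha hb ⊢
  intro n
  rw [Submodule.mem_comap, deltaE_mul]
  refine Submodule.sum_mem _ fun p hp => ?_
  have hcard : n ≤ #p.1 + #p.2 := by
    simpa [(mem_filter.1 hp).2] using card_union_le p.1 p.2
  have hprod := Submodule.mul_mem_smul_pointwise_top (deltaE_mem_pow_smul_top ha n p.1)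
    (deltaE_mem_pow_smul_top hb n p.2)
  rw [← pow_add] at hprod
  exact Submodule.pow_smul_pointwise_top_le t hcard hprod

variable (R H) in
def hsetSubalgebra (t : R) : Subalgebra R H :=
  (hsetSubmodule R H t).toSubalgebra (one_mem_hsetSubmodule t) fun _ _ => mul_mem_hsetSubmodule

end Bialgebra

theorem statement5_general (k : Type) [Field k] (H : Type) [Ring H]
    [HopfAlgebra (PowerSeries k) H] :
    ∃ S : Subalgebra (PowerSeries k) H,
      (S : Set H) =
        Hset (PowerSeries k) H Coalgebra.counit Coalgebra.comul PowerSeries.X :=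
  ⟨hsetSubalgebra _ H PowerSeries.X, coe_hsetSubmodule _⟩

/-- for a topologically free Hopf `k[[h]]`-algebra `H`
(h-torsionless, h-adically separated and complete), `H'` is a
`k[[h]]`-subalgebra of `H` (in particular it contains `1`). -/
theorem statement5 (k : Type) [Field k] (H : Type) [Ring H]
    [HopfAlgebra (PowerSeries k) H]
    (htf : ∀ a : H, (PowerSeries.X : PowerSeries k) • a = 0 → a = 0)
    [IsAdicComplete (Ideal.span {(PowerSeries.X : PowerSeries k)}) H] :
    ∃ S : Subalgebra (PowerSeries k) H,
      (S : Set H) =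
        Hset (PowerSeries k) H Coalgebra.counit Coalgebra.comul PowerSeries.X :=
  statement5_general k H

end
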